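/- In the BCK-algebra X'_n (n ≥ 5), for all x, y ∈ X'_n, if x ≤ n in the BCK-order and y ≠ n, then x·y ≤ n·y. -/

import Mathlib

/-! On `{0, …, n - 1}` the BCK-order of `X'_n` is the usual order of `ℕ`, while `n` lies above
every element except `n - 1`; so `x ≤ n` means `x ≠ n - 1`. For `y = 0` the claim is `x ≤ n`
itself. For `y ≠ 0` both `x·y` and `n·y` lie below `n`, and `x·y ≤ n·y` holds already in `ℕ`. -/

/-- The operation of the linearly ordered BCK-algebra `X_n` written on natural
numbers: `x*y = 0` if `x ≤ y`, `x*0 = x`, `x*y = 1` if `x = y+1`, and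
`x*y = x−y−1` if `x > y+1` and `y ≥ 1`. -/
def natStar (x y : ℕ) : ℕ :=
  if x ≤ y then 0 else if y = 0 then x else if x = y + 1 then 1 else x - y - 1

/-- The operation of `X'_n = {0, 1, …, n}` written on natural numbers:
`x·y = x*y` for `x, y ≤ n−1`; `n·0 = n`; `n·y = n−y−1` for `1 ≤ y ≤ n−2`;
`n·(n−1) = 1`; `x·n = 0` for every `x ≠ n−1` (in particular `n·n = 0`);
and `(n−1)·n = 1`. -/
def primeVal (n x y : ℕ) : ℕ :=
  if y = n then (if x = n - 1 then 1 else 0)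
  else if x = n then (if y = 0 then n else if y = n - 1 then 1 else n - y - 1)
  else natStar x y

theorem natStar_le (x y : ℕ) : natStar x y ≤ x := by
  unfold natStar; split_ifs <;> omega

theorem primeVal_lt {n x y : ℕ} (hn : 1 ≤ n) (hx : x < n + 1) (hy : y < n + 1) :
    primeVal n x y < n + 1 := by
  have h := natStar_le x y
  unfold primeVal; split_ifs <;> omega

/-- The BCK-algebra operation of `X'_n = {0, 1, …, n}` (for `n ≥ 5`),
as an operation on `Fin (n+1)`. -/
def primeOp {n : ℕ} (hn : 5 ≤ n) (x y : Fin (n + 1)) : Fin (n + 1) :=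
  ⟨primeVal n x y, primeVal_lt (by omega) x.isLt y.isLt⟩

theorem natStar_eq_zero_iff {x y : ℕ} : natStar x y = 0 ↔ x ≤ y := by
  unfold natStar; split_ifs <;> grind

theorem primeVal_eq_zero_iff {n x y : ℕ} (hn : 0 < n) (hy : y ≤ n) :
    primeVal n x y = 0 ↔ (y = n ∧ x ≠ n - 1) ∨ (x ≠ n ∧ y ≠ n ∧ x ≤ y) := by
  unfold primeVal; split_ifs <;> grind [natStar_eq_zero_iff]

theorem primeVal_zero_right {n : ℕ} (hn : 0 < n) (x : ℕ) : primeVal n x 0 = x := by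
  unfold primeVal natStar; split_ifs <;> omega

theorem primeVal_top_left_lt {n y : ℕ} (hn : 0 < n) (hy₀ : y ≠ 0) (hy : y ≠ n) :
    primeVal n n y < n := by
  unfold primeVal; split_ifs <;> omega

theorem primeVal_le_primeVal_top_left {n x y : ℕ} (hx : x ≤ n) (hxn : x ≠ n - 1) :
    primeVal n x y ≤ primeVal n n y := by
  unfold primeVal natStar; split_ifs <;> omega

/-- In the BCK-algebra `X'_n` (`n ≥ 5`), for all `x, y ∈ X'_n`, if `x ≤ n` in
the BCK-order and `y ≠ n`, then `x·y ≤ n·y`. -/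
theorem primeOp_le_top_mono (n : ℕ) (hn : 5 ≤ n) (x y : Fin (n + 1))
    (hx : primeOp hn x ⟨n, by omega⟩ = 0) (hy : y ≠ ⟨n, by omega⟩) :
    primeOp hn (primeOp hn x y) (primeOp hn ⟨n, by omega⟩ y) = 0 := by
  have hn₀ : 0 < n := by omega
  have hxn : (x : ℕ) ≠ n - 1 := by
    have hx' : primeVal n x n = 0 := congrArg Fin.val hx
    rcases (primeVal_eq_zero_iff hn₀ le_rfl).1 hx' with h | h
    · exact h.2
    · exact absurd rfl h.2.1
  have hyn : (y : ℕ) ≠ n := fun h => hy (Fin.ext h)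
  apply Fin.ext
  change primeVal n (primeVal n x y) (primeVal n n y) = 0
  rw [primeVal_eq_zero_iff hn₀ (Nat.lt_succ_iff.1 (primeVal_lt hn₀ n.lt_succ_self y.isLt))]
  rcases eq_or_ne (y : ℕ) 0 with hy₀ | hy₀
  · left
    rw [hy₀, primeVal_zero_right hn₀, primeVal_zero_right hn₀]
    exact ⟨rfl, hxn⟩
  · right
    have hle : primeVal n x y ≤ primeVal n n y := primeVal_le_primeVal_top_left x.is_le hxn
    have hlt : primeVal n n y < n := primeVal_top_left_lt hn₀ hy₀ hyn
    omega
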